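/- arXiv:2001.06838 — 2 statements merged into one kernel-verified Lean document; each statement's English description precedes it below -/
import Mathlib

section
/- Let (ξ_t)_{t≥1} be a sequence of independent real-valued random variables that are uniformly bounded (there exists C > 0 with |ξ_t| ≤ C almost surely for every t), and suppose ξ_t converges in distribution to a random variable ξ, i.e. for every ε ∈ ℝ, lim_{t→∞} P(ξ_t ≤ ε) = P(ξ ≤ ε). Fix α ∈ (0,1). Then the variance of the exponential moving average statistic satisfies lim_{t→∞} Var(E_t) = ((1−α)/(1+α))·Var(ξ); equivalently, Var(E_t) = ((1−α^{2t})(1−α)/(1+α))·Var(ξ) + o(1) as t → ∞. -/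
/-!
By independence, `Var(E_t) = (1 - α)² ∑_{j < t} α^{2j} Var(ξ_{t-j})`: the sequence `Var(ξ_t)` is
convolved with a summable geometric kernel, so `Var(E_t)` tends to `(1 - α)² / (1 - α²)` times
`lim Var(ξ_t)`. That limit is `Var(ξ)`: after a shift, the variables live in a fixed interval
`[0, M]`, where the layer-cake formula writes the first and second moments as integrals over
`(0, M]` of expressions in the distribution function, and dominated convergence passes the
pointwise convergence of distribution functions through these integrals.
-/

open MeasureTheory ProbabilityTheory Filter Topology Set

lemma tendsto_sum_range_mul_sub_of_summable {w a : ℕ → ℝ} {L : ℝ} (hw : Summable w)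
    (ha : Tendsto a atTop (𝓝 L)) :
    Tendsto (fun t => ∑ j ∈ Finset.range t, w j * a (t - j)) atTop (𝓝 ((∑' j, w j) * L)) := by
  obtain ⟨K, hK⟩ := ha.norm.bddAbove_range
  set f : ℕ → ℕ → ℝ := fun t j => if j < t then w j * a (t - j) else 0
  have hsum : ∀ t, ∑' j, f t j = ∑ j ∈ Finset.range t, w j * a (t - j) := fun t => by
    rw [tsum_eq_sum (s := Finset.range t) fun j hj => if_neg (by simpa using hj)]
    exact Finset.sum_congr rfl fun j hj => if_pos (Finset.mem_range.mp hj)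
  have hlim : ∀ j, Tendsto (f · j) atTop (𝓝 (w j * L)) := fun j =>
    ((ha.comp (tendsto_sub_atTop_nat j)).const_mul (w j)).congr'
      ((eventually_gt_atTop j).mono fun t ht => (if_pos ht).symm)
  have hbound : ∀ t j, ‖f t j‖ ≤ |w j| * K := fun t j => by
    by_cases hj : j < t
    · simpa [f, hj, abs_mul] using
        mul_le_mul_of_nonneg_left (hK (Set.mem_range_self (t - j))) (abs_nonneg (w j))
    · simpa [f, hj] using
        mul_nonneg (abs_nonneg (w j)) ((norm_nonneg _).trans (hK (Set.mem_range_self 0)))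
  rw [← tsum_mul_right]
  simpa only [hsum] using tendsto_tsum_of_dominated_convergence (hw.abs.mul_right K) hlim
    (Eventually.of_forall hbound)

section CDF

variable {Ω : Type*} [MeasurableSpace Ω] {μ : Measure Ω}

lemma measureReal_sq_le_eq {f : Ω → ℝ} (hf : 0 ≤ᵐ[μ] f) {t : ℝ} (ht : 0 ≤ t) :
    μ.real {ω | f ω ^ 2 ≤ t} = μ.real {ω | f ω ≤ √t} := by
  refine measureReal_congr ?_
  filter_upwards [hf] with ω hω
  exact propext (Real.le_sqrt hω ht).symm

variable [IsProbabilityMeasure μ]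

lemma integral_eq_integral_Ioc_one_sub_measureReal_le {f : Ω → ℝ} {M : ℝ} (hf : Measurable f)
    (hfM : ∀ᵐ ω ∂μ, f ω ∈ Icc 0 M) :
    ∫ ω, f ω ∂μ = ∫ t in Ioc 0 M, (1 - μ.real {ω | f ω ≤ t}) := by
  have hnn : 0 ≤ᵐ[μ] f := hfM.mono fun ω h => h.1
  have hint : Integrable f μ := memLp_one_iff_integrable.mp
    (memLp_of_bounded hfM hf.aestronglyMeasurable 1)
  rw [hint.integral_eq_integral_Ioc_meas_le hnn (hfM.mono fun ω h => h.2)]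
  refine integral_congr_ae ?_
  filter_upwards [meas_le_ae_eq_meas_lt μ (volume.restrict (Ioc 0 M)) f] with t ht
  have hcompl : {ω | t < f ω} = {ω | f ω ≤ t}ᶜ := by ext; simp
  rw [measureReal_def, ht, hcompl, ← measureReal_def,
    probReal_compl_eq_one_sub (measurableSet_le hf measurable_const)]

lemma tendsto_integral_of_tendsto_measureReal_le {f : ℕ → Ω → ℝ} {g : Ω → ℝ} {M : ℝ}
    (hf : ∀ n, Measurable (f n)) (hg : Measurable g)
    (hfM : ∀ n, ∀ᵐ ω ∂μ, f n ω ∈ Icc 0 M) (hgM : ∀ᵐ ω ∂μ, g ω ∈ Icc 0 M)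
    (hcdf : ∀ t, 0 < t →
      Tendsto (fun n => μ.real {ω | f n ω ≤ t}) atTop (𝓝 (μ.real {ω | g ω ≤ t}))) :
    Tendsto (fun n => ∫ ω, f n ω ∂μ) atTop (𝓝 (∫ ω, g ω ∂μ)) := by
  simp only [integral_eq_integral_Ioc_one_sub_measureReal_le (hf _) (hfM _),
    integral_eq_integral_Ioc_one_sub_measureReal_le hg hgM]
  have hcdf_mono (h : Ω → ℝ) : Monotone fun t => μ.real {ω | h ω ≤ t} :=
    fun _ _ hst => measureReal_mono fun _ hω => le_trans hω hst
  refine tendsto_integral_of_dominated_convergence (fun _ => 1)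
    (fun n => (measurable_const.sub (hcdf_mono (f n)).measurable).aestronglyMeasurable)
    (integrableOn_const measure_Ioc_lt_top.ne) (fun n => Eventually.of_forall fun t => ?_)
    ((ae_restrict_iff' measurableSet_Ioc).mpr
      (Eventually.of_forall fun t ht => tendsto_const_nhds.sub (hcdf t ht.1)))
  rw [Real.norm_eq_abs, abs_le]
  constructor <;> linarith [measureReal_nonneg (μ := μ) (s := {ω | f n ω ≤ t}),
    measureReal_le_one (μ := μ) (s := {ω | f n ω ≤ t})]

lemma ae_le_of_tendsto_measureReal_le {f : ℕ → Ω → ℝ} {g : Ω → ℝ} {b : ℝ}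
    (hf : ∀ n, Measurable (f n)) (hg : Measurable g) (hfb : ∀ n, ∀ᵐ ω ∂μ, f n ω ≤ b)
    (hcdf : Tendsto (fun n => μ.real {ω | f n ω ≤ b}) atTop (𝓝 (μ.real {ω | g ω ≤ b}))) :
    ∀ᵐ ω ∂μ, g ω ≤ b := by
  have hone : ∀ n, μ.real {ω | f n ω ≤ b} = 1 := fun n => by
    rw [measureReal_def, (ae_iff_prob_eq_one
      (measurableSet_setOfPred.mp (measurableSet_le (hf n) measurable_const))).mp (hfb n)]
    rfl
  have hg_one : μ.real {ω | g ω ≤ b} = 1 :=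
    tendsto_nhds_unique (hcdf.congr hone) tendsto_const_nhds
  rw [ae_iff_prob_eq_one (measurableSet_setOfPred.mp (measurableSet_le hg measurable_const))]
  exact (ENNReal.toReal_eq_one_iff _).mp hg_one

lemma ae_ge_of_tendsto_measureReal_le {f : ℕ → Ω → ℝ} {g : Ω → ℝ} {a : ℝ}
    (hfa : ∀ n, ∀ᵐ ω ∂μ, a ≤ f n ω)
    (hcdf : ∀ t, Tendsto (fun n => μ.real {ω | f n ω ≤ t}) atTop (𝓝 (μ.real {ω | g ω ≤ t}))) :
    ∀ᵐ ω ∂μ, a ≤ g ω := by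
  have hnull : ∀ t < a, μ {ω | g ω ≤ t} = 0 := fun t ht => by
    have hzero : ∀ n, μ.real {ω | f n ω ≤ t} = 0 := fun n => by
      rw [measureReal_eq_zero_iff, measure_eq_zero_iff_ae_notMem]
      filter_upwards [hfa n] with ω hω using not_le.mpr (ht.trans_le hω)
    exact (measureReal_eq_zero_iff).mp
      (tendsto_nhds_unique ((hcdf t).congr hzero) tendsto_const_nhds)
  have hae : ∀ᵐ ω ∂μ, ∀ n : ℕ, a - 1 / ((n : ℝ) + 1) < g ω := ae_all_iff.mpr fun n => by
    filter_upwards [measure_eq_zero_iff_ae_notMem.mp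
      (hnull _ (sub_lt_self a Nat.one_div_pos_of_nat))] with ω hω using not_le.mp hω
  filter_upwards [hae] with ω hω
  have hlim : Tendsto (fun n : ℕ => a - 1 / ((n : ℝ) + 1)) atTop (𝓝 a) := by
    simpa using tendsto_const_nhds.sub (tendsto_one_div_add_atTop_nhds_zero_nat (𝕜 := ℝ))
  exact le_of_tendsto' hlim fun n => (hω n).le

lemma tendsto_variance_of_tendsto_measureReal_le_of_nonneg {f : ℕ → Ω → ℝ} {g : Ω → ℝ} {M : ℝ}
    (hf : ∀ n, Measurable (f n)) (hg : Measurable g)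
    (hfM : ∀ n, ∀ᵐ ω ∂μ, f n ω ∈ Icc 0 M) (hgM : ∀ᵐ ω ∂μ, g ω ∈ Icc 0 M)
    (hcdf : ∀ t, 0 < t →
      Tendsto (fun n => μ.real {ω | f n ω ≤ t}) atTop (𝓝 (μ.real {ω | g ω ≤ t}))) :
    Tendsto (fun n => variance (f n) μ) atTop (𝓝 (variance g μ)) := by
  have hsqM {h : Ω → ℝ} (hM : ∀ᵐ ω ∂μ, h ω ∈ Icc 0 M) : ∀ᵐ ω ∂μ, h ω ^ 2 ∈ Icc 0 (M ^ 2) :=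
    hM.mono fun ω hω => ⟨sq_nonneg _, pow_le_pow_left₀ hω.1 hω.2 2⟩
  have hmean := tendsto_integral_of_tendsto_measureReal_le hf hg hfM hgM hcdf
  have hsecond := tendsto_integral_of_tendsto_measureReal_le (fun n => (hf n).pow_const 2)
    (hg.pow_const 2) (fun n => hsqM (hfM n)) (hsqM hgM) fun t ht => by
      simp only [measureReal_sq_le_eq ((hfM _).mono fun ω hω => hω.1) ht.le,
        measureReal_sq_le_eq (hgM.mono fun ω hω => hω.1) ht.le]
      exact hcdf _ (Real.sqrt_pos.mpr ht)
  have hvar {h : Ω → ℝ} (hh : Measurable h) (hM : ∀ᵐ ω ∂μ, h ω ∈ Icc 0 M) :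
      variance h μ = ∫ ω, h ω ^ 2 ∂μ - (∫ ω, h ω ∂μ) ^ 2 :=
    variance_eq_sub (memLp_of_bounded hM hh.aestronglyMeasurable 2)
  simp only [hvar (hf _) (hfM _), hvar hg hgM]
  exact hsecond.sub (hmean.pow 2)

lemma tendsto_variance_of_tendsto_measureReal_le {f : ℕ → Ω → ℝ} {g : Ω → ℝ} {a b : ℝ}
    (hf : ∀ n, Measurable (f n)) (hg : Measurable g) (hfab : ∀ n, ∀ᵐ ω ∂μ, f n ω ∈ Icc a b)
    (hcdf : ∀ t, Tendsto (fun n => μ.real {ω | f n ω ≤ t}) atTop (𝓝 (μ.real {ω | g ω ≤ t}))) :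
    Tendsto (fun n => variance (f n) μ) atTop (𝓝 (variance g μ)) := by
  have hga : ∀ᵐ ω ∂μ, a ≤ g ω :=
    ae_ge_of_tendsto_measureReal_le (fun n => (hfab n).mono fun _ h => h.1) hcdf
  have hgb : ∀ᵐ ω ∂μ, g ω ≤ b :=
    ae_le_of_tendsto_measureReal_le hf hg (fun n => (hfab n).mono fun _ h => h.2) (hcdf b)
  have hshift {h : Ω → ℝ} (hh : Measurable h) : variance h μ = variance (fun ω => h ω - a) μ :=
    (variance_sub_const hh.aestronglyMeasurable a).symm
  simp only [hshift (hf _), hshift hg]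
  refine tendsto_variance_of_tendsto_measureReal_le_of_nonneg (M := b - a)
    (fun n => (hf n).sub_const a) (hg.sub_const a)
    (fun n => (hfab n).mono fun ω hω => ⟨sub_nonneg.mpr hω.1, sub_le_sub_right hω.2 a⟩) ?_
    fun t _ => by simpa only [sub_le_iff_le_add] using hcdf (t + a)
  filter_upwards [hga, hgb] with ω h1 h2 using ⟨sub_nonneg.mpr h1, sub_le_sub_right h2 a⟩

end CDF

section EMA

variable {Ω : Type*} [MeasurableSpace Ω] {μ : Measure Ω}

lemma variance_sum_const_mul_of_iIndepFun {ι : Type*} {X : ι → Ω → ℝ} {s : Finset ι}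
    (c : ι → ℝ) (hX : ∀ i ∈ s, MemLp (X i) 2 μ) (hind : iIndepFun X μ) :
    variance (fun ω => ∑ i ∈ s, c i * X i ω) μ = ∑ i ∈ s, c i ^ 2 * variance (X i) μ := by
  have hfun : (fun ω => ∑ i ∈ s, c i * X i ω) = ∑ i ∈ s, fun ω => c i * X i ω := by
    ext ω; simp only [Finset.sum_apply]
  rw [hfun, IndepFun.variance_sum (fun i hi => (hX i hi).const_mul (c i))
    fun i _ j _ hij => (hind.indepFun hij).comp (measurable_const_mul (c i))
      (measurable_const_mul (c j))]
  simp only [variance_const_mul]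

def expMovingAvg (α : ℝ) (X : ℕ → Ω → ℝ) (t : ℕ) (ω : Ω) : ℝ :=
  (1 - α) * ∑ i ∈ Finset.Icc 1 t, α ^ (t - i) * X i ω

lemma variance_expMovingAvg {X : ℕ → Ω → ℝ} (hX : ∀ i, MemLp (X i) 2 μ) (hind : iIndepFun X μ)
    (α : ℝ) (t : ℕ) :
    variance (expMovingAvg α X t) μ
      = (1 - α) ^ 2 * ∑ j ∈ Finset.range t, (α ^ 2) ^ j * variance (X (t - j)) μ := by
  unfold expMovingAvg
  rw [variance_const_mul, variance_sum_const_mul_of_iIndepFun _ (fun i _ => hX i) hind]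
  congr 1
  refine Finset.sum_nbij' (fun i => t - i) (fun j => t - j) ?_ ?_ ?_ ?_ ?_
  · intro i hi; simp only [Finset.mem_Icc, Finset.mem_range] at hi ⊢; omega
  · intro j hj; simp only [Finset.mem_Icc, Finset.mem_range] at hj ⊢; omega
  · intro i hi; simp only [Finset.mem_Icc] at hi; omega
  · intro j hj; simp only [Finset.mem_range] at hj; omega
  · intro i hi
    simp only [Finset.mem_Icc] at hi
    rw [← pow_mul, ← pow_mul', Nat.sub_sub_self hi.2]

end EMA

theorem ema_variance_tendsto_general
    {Ω : Type*} [MeasurableSpace Ω] (μ : Measure Ω) [IsProbabilityMeasure μ]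
    (ξ : ℕ → Ω → ℝ) (ξlim : Ω → ℝ)
    (hmeas : ∀ t, Measurable (ξ t)) (hmeaslim : Measurable ξlim)
    (C : ℝ)
    (hbdd : ∀ t, ∀ᵐ ω ∂μ, |ξ t ω| ≤ C)
    (hindep : iIndepFun ξ μ)
    (hconv : ∀ ε : ℝ, Tendsto (fun t => (μ {ω | ξ t ω ≤ ε}).toReal) atTop
      (nhds ((μ {ω | ξlim ω ≤ ε}).toReal)))
    (α : ℝ) (hα : α ∈ Set.Ioo (0 : ℝ) 1) :
    Tendsto (fun t => variance (fun ω => (1 - α) * ∑ i ∈ Finset.Icc 1 t, α ^ (t - i) * ξ i ω) μ)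
      atTop (nhds ((1 - α) / (1 + α) * variance ξlim μ)) ∧
    Tendsto (fun t =>
        variance (fun ω => (1 - α) * ∑ i ∈ Finset.Icc 1 t, α ^ (t - i) * ξ i ω) μ
          - (1 - α ^ (2 * t)) * (1 - α) / (1 + α) * variance ξlim μ)
      atTop (nhds 0) := by
  obtain ⟨hα0, hα1⟩ := hα
  have hξC : ∀ t, ∀ᵐ ω ∂μ, ξ t ω ∈ Icc (-C) C := fun t => (hbdd t).mono fun _ h => abs_le.mp h
  have hL2 : ∀ t, MemLp (ξ t) 2 μ :=
    fun t => memLp_of_bounded (hξC t) (hmeas t).aestronglyMeasurable 2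
  have hα2 : α ^ 2 < 1 := pow_lt_one₀ hα0.le hα1 two_ne_zero
  have hlim : Tendsto (fun t => variance (expMovingAvg α ξ t) μ) atTop
      (𝓝 ((1 - α) ^ 2 * ((∑' j, (α ^ 2) ^ j) * variance ξlim μ))) := by
    simp only [variance_expMovingAvg hL2 hindep]
    exact (tendsto_sum_range_mul_sub_of_summable (summable_geometric_of_lt_one (sq_nonneg α) hα2)
      (tendsto_variance_of_tendsto_measureReal_le hmeas hmeaslim hξC hconv)).const_mul _
  have hconst : (1 - α) ^ 2 * ((∑' j, (α ^ 2) ^ j) * variance ξlim μ)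
      = (1 - α) / (1 + α) * variance ξlim μ := by
    have h1α : (1 : ℝ) + α ≠ 0 := by positivity
    rw [tsum_geometric_of_lt_one (sq_nonneg α) hα2, show 1 - α ^ 2 = (1 - α) * (1 + α) by ring]
    field_simp [sub_ne_zero.mpr hα1.ne']
  rw [hconst] at hlim
  refine ⟨hlim, ?_⟩
  have hpow : Tendsto (fun t : ℕ => α ^ (2 * t)) atTop (𝓝 0) := by
    simpa only [pow_mul] using tendsto_pow_atTop_nhds_zero_of_lt_one (sq_nonneg α) hα2
  have hdiff := hlim.sub ((tendsto_const_nhds (x := (1 : ℝ))).sub hpow |>.mul_const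
    ((1 - α) / (1 + α) * variance ξlim μ))
  rw [sub_zero, one_mul, sub_self] at hdiff
  refine hdiff.congr fun t => ?_
  change _ = variance (expMovingAvg α ξ t) μ - _
  ring

/-- For independent, uniformly bounded real random variables `ξ t` converging in
distribution to `ξlim`, and `α ∈ (0,1)`, the variance of the exponential moving average statistic
`E_t = (1-α) ∑_{i=1}^t α^(t-i) ξ_i` satisfies
`lim_{t→∞} Var(E_t) = ((1-α)/(1+α)) Var(ξlim)`; equivalently,
`Var(E_t) = ((1-α^(2t))(1-α)/(1+α)) Var(ξlim) + o(1)` as `t → ∞`. -/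
theorem ema_variance_tendsto
    {Ω : Type*} [MeasurableSpace Ω] (μ : Measure Ω) [IsProbabilityMeasure μ]
    (ξ : ℕ → Ω → ℝ) (ξlim : Ω → ℝ)
    (hmeas : ∀ t, Measurable (ξ t)) (hmeaslim : Measurable ξlim)
    (C : ℝ) (hC : 0 < C)
    (hbdd : ∀ t, ∀ᵐ ω ∂μ, |ξ t ω| ≤ C)
    (hindep : iIndepFun ξ μ)
    (hconv : ∀ ε : ℝ, Tendsto (fun t => (μ {ω | ξ t ω ≤ ε}).toReal) atTop
      (nhds ((μ {ω | ξlim ω ≤ ε}).toReal)))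
    (α : ℝ) (hα : α ∈ Set.Ioo (0 : ℝ) 1) :
    Tendsto (fun t => variance (fun ω => (1 - α) * ∑ i ∈ Finset.Icc 1 t, α ^ (t - i) * ξ i ω) μ)
      atTop (nhds ((1 - α) / (1 + α) * variance ξlim μ)) ∧
    Tendsto (fun t =>
        variance (fun ω => (1 - α) * ∑ i ∈ Finset.Icc 1 t, α ^ (t - i) * ξ i ω) μ
          - (1 - α ^ (2 * t)) * (1 - α) / (1 + α) * variance ξlim μ)
      atTop (nhds 0) :=
  ema_variance_tendsto_general μ ξ ξlim hmeas hmeaslim C hbdd hindep hconv α hα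
end

section
/- Fix B ≥ 2, let x ∈ ℝ^B be a point where σ(x) > 0, and let L : ℝ^B → ℝ be differentiable at y(x). Then L ∘ y is differentiable at x and its partial derivatives satisfy the batch-normalization backward formula: ∂(L∘y)/∂x_b (x) = (1/σ(x)) · (∂L/∂y_b (y(x)) − g − y_b(x)·Ψ), where g = (1/B) Σ_{a=1}^B ∂L/∂y_a (y(x)) and Ψ = (1/B) Σ_{a=1}^B y_a(x) · ∂L/∂y_a (y(x)). -/
open scoped BigOperators

/-- Batch mean `μ(x) = (1/B) ∑_b x_b`. -/
noncomputable def batchMean {B : ℕ} (x : Fin B → ℝ) : ℝ :=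
  (∑ b, x b) / B

/-- Batch standard deviation `σ(x) = sqrt((1/B) ∑_b (x_b - μ(x))²)`. -/
noncomputable def batchStd {B : ℕ} (x : Fin B → ℝ) : ℝ :=
  Real.sqrt ((∑ b, (x b - batchMean x) ^ 2) / B)

/-- Batch normalization map `y_a(x) = (x_a - μ(x)) / σ(x)`. -/
noncomputable def batchNorm {B : ℕ} (x : Fin B → ℝ) : Fin B → ℝ :=
  fun a => (x a - batchMean x) / batchStd x

/-!
The mean is linear and `σ = √Var`, and since `∑ₐ (xₐ - μ) = 0` the mean drops out of the
derivative of the variance: `dσ(v) = (1/B) ∑ₐ yₐ vₐ`. The quotient rule then gives the Jacobian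
`∂yₐ/∂x_b = σ⁻¹ (δ_{ab} - 1/B - yₐ y_b / B)`, and the backward formula is the chain rule
`d(L ∘ y)(e_b) = dL(∂y/∂x_b)` with `dL(1) = ∑ₐ ∂L/∂yₐ` and `dL(y) = ∑ₐ yₐ ∂L/∂yₐ`.
-/

open Finset ContinuousLinearMap

theorem map_eq_sum_smul_map_single {ι R M F : Type*} [Fintype ι] [DecidableEq ι] [Semiring R]
    [AddCommMonoid M] [Module R M] [FunLike F (ι → R) M] [LinearMapClass F R (ι → R) M]
    (f : F) (x : ι → R) : f x = ∑ i, x i • f (Pi.single i 1) := by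
  conv_lhs => rw [pi_eq_sum_univ' x]
  simp only [map_sum, map_smul]

section

variable {B : ℕ}

theorem sum_sub_batchMean (x : Fin B → ℝ) : ∑ a, (x a - batchMean x) = 0 := by
  rcases eq_or_ne B 0 with rfl | hB
  · simp
  · simp [sum_sub_distrib, batchMean, mul_div_cancel₀, hB]

variable (B) in
noncomputable def batchMeanCLM : (Fin B → ℝ) →L[ℝ] ℝ :=
  (B : ℝ)⁻¹ • ∑ b, proj b

@[simp]
theorem coe_batchMeanCLM : ⇑(batchMeanCLM B) = batchMean := by
  ext v
  simp [batchMeanCLM, batchMean, div_eq_inv_mul]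

theorem hasFDerivAt_batchMean (x : Fin B → ℝ) : HasFDerivAt batchMean (batchMeanCLM B) x := by
  simpa only [coe_batchMeanCLM] using (batchMeanCLM B).hasFDerivAt (x := x)

theorem sum_sub_batchMean_mul_sub (x v : Fin B → ℝ) (c : ℝ) :
    ∑ a, (x a - batchMean x) * (v a - c) = ∑ a, (x a - batchMean x) * v a := by
  have hc : ∑ a, (x a - batchMean x) * c = 0 := by rw [← sum_mul, sum_sub_batchMean, zero_mul]
  simp only [mul_sub, sum_sub_distrib, hc, sub_zero]

noncomputable def batchVar (x : Fin B → ℝ) : ℝ :=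
  (∑ b, (x b - batchMean x) ^ 2) / B

theorem batchStd_eq_sqrt_batchVar (x : Fin B → ℝ) : batchStd x = √(batchVar x) := rfl

theorem hasFDerivAt_batchVar (x : Fin B → ℝ) :
    HasFDerivAt batchVar
      ((2 / B : ℝ) • ∑ a, (x a - batchMean x) • (proj a : (Fin B → ℝ) →L[ℝ] ℝ)) x := by
  have hsq : ∀ a, HasFDerivAt (fun z : Fin B → ℝ => (z a - batchMean z) ^ 2)
      ((2 * (x a - batchMean x)) • (proj a - batchMeanCLM B)) x := fun a => by
    simpa using ((hasFDerivAt_apply a x).sub (hasFDerivAt_batchMean x)).pow 2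
  have hsum := (HasFDerivAt.fun_sum (u := univ) fun a _ => hsq a).mul_const (B : ℝ)⁻¹
  simp only [← div_eq_mul_inv] at hsum
  refine hsum.congr_fderiv ?_
  ext v
  simp only [smul_apply, _root_.sum_apply, sub_apply, proj_apply, coe_batchMeanCLM, smul_eq_mul,
    mul_assoc, ← mul_sum, sum_sub_batchMean_mul_sub]
  ring

theorem hasFDerivAt_batchStd {x : Fin B → ℝ} (hσ : batchStd x ≠ 0) :
    HasFDerivAt batchStd ((B : ℝ)⁻¹ • ∑ a, batchNorm x a • (proj a : (Fin B → ℝ) →L[ℝ] ℝ)) x := by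
  have hvar : batchVar x ≠ 0 := fun h => hσ (by rw [batchStd_eq_sqrt_batchVar, h, Real.sqrt_zero])
  refine ((hasFDerivAt_batchVar x).sqrt hvar).congr_fderiv ?_
  ext v
  simp only [← batchStd_eq_sqrt_batchVar, one_div, mul_inv_rev, smul_apply, _root_.sum_apply,
    proj_apply, smul_eq_mul, mul_sum, batchNorm]
  exact sum_congr rfl fun i _ => by ring

noncomputable def batchNormFDeriv (x : Fin B → ℝ) : (Fin B → ℝ) →L[ℝ] (Fin B → ℝ) :=
  pi fun a => (batchStd x)⁻¹ •
    (proj a - batchMeanCLM B - (batchNorm x a / B) • ∑ c, batchNorm x c • proj c)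

theorem batchNormFDeriv_apply (x v : Fin B → ℝ) (a : Fin B) :
    batchNormFDeriv x v a = (batchStd x)⁻¹ *
      (v a - batchMean v - batchNorm x a / B * ∑ c, batchNorm x c * v c) := by
  simp [batchNormFDeriv]

theorem hasFDerivAt_batchNorm {x : Fin B → ℝ} (hσ : batchStd x ≠ 0) :
    HasFDerivAt batchNorm (batchNormFDeriv x) x := by
  refine hasFDerivAt_pi'' fun a => ?_
  have hprod : (fun z => batchNorm z a) = fun z => (z a - batchMean z) * (batchStd z)⁻¹ := by
    ext z
    exact div_eq_mul_inv _ _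
  rw [hprod]
  refine (((hasFDerivAt_apply a x).sub (hasFDerivAt_batchMean x)).fun_mul
    ((hasDerivAt_inv hσ).comp_hasFDerivAt x (hasFDerivAt_batchStd hσ))).congr_fderiv ?_
  ext v
  simp only [Pi.sub_apply, batchNorm, neg_smul, smul_neg, Function.comp_apply, add_apply,
    neg_apply, smul_apply, _root_.sum_apply, proj_apply, smul_eq_mul, sub_apply, coe_batchMeanCLM,
    comp_apply, batchNormFDeriv_apply]
  field_simp
  ring

theorem batchNormFDeriv_single (x : Fin B → ℝ) (b : Fin B) :
    batchNormFDeriv x (Pi.single b 1) =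
      (batchStd x)⁻¹ • (Pi.single b 1 - (B : ℝ)⁻¹ • 1 - (batchNorm x b / B) • batchNorm x) := by
  ext a
  have hmean : batchMean (Pi.single b 1 : Fin B → ℝ) = (B : ℝ)⁻¹ := by
    simp [batchMean, Pi.single_apply]
  have hdot : ∑ c, batchNorm x c * (Pi.single b 1 : Fin B → ℝ) c = batchNorm x b := by
    simp [Pi.single_apply]
  rw [batchNormFDeriv_apply, hmean, hdot]
  simp only [Pi.smul_apply, Pi.sub_apply, Pi.one_apply, smul_eq_mul]
  ring

end

theorem batchNorm_backward_general
    {B : ℕ} (x : Fin B → ℝ) (hσ : 0 < batchStd x)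
    (L : (Fin B → ℝ) → ℝ) (hL : DifferentiableAt ℝ L (batchNorm x)) :
    DifferentiableAt ℝ (L ∘ batchNorm (B := B)) x ∧
    ∀ b : Fin B,
      fderiv ℝ (L ∘ batchNorm (B := B)) x (Pi.single b 1) =
        (1 / batchStd x) *
          (fderiv ℝ L (batchNorm x) (Pi.single b 1)
            - (∑ a, fderiv ℝ L (batchNorm x) (Pi.single a 1)) / B
            - batchNorm x b *
                ((∑ a, batchNorm x a * fderiv ℝ L (batchNorm x) (Pi.single a 1)) / B)) := by
  have hC := hL.hasFDerivAt.comp x (hasFDerivAt_batchNorm hσ.ne')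
  refine ⟨hC.differentiableAt, fun b => ?_⟩
  rw [hC.fderiv, comp_apply, batchNormFDeriv_single, map_smul, map_sub, map_sub, map_smul,
    map_smul, map_eq_sum_smul_map_single _ 1, map_eq_sum_smul_map_single _ (batchNorm x)]
  simp only [smul_eq_mul, Pi.one_apply, one_mul]
  ring

/-- For `B ≥ 2`, `x ∈ ℝ^B` with `σ(x) > 0`, and `L : ℝ^B → ℝ` differentiable at
`y(x)`, the composite `L ∘ y` is differentiable at `x` and satisfies the batch-normalization
backward formula
`∂(L∘y)/∂x_b = (1/σ(x)) (∂L/∂y_b - g - y_b(x) Ψ)`, where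
`g = (1/B) ∑_a ∂L/∂y_a` and `Ψ = (1/B) ∑_a y_a(x) ∂L/∂y_a`. -/
theorem batchNorm_backward
    {B : ℕ} (hB : 2 ≤ B) (x : Fin B → ℝ) (hσ : 0 < batchStd x)
    (L : (Fin B → ℝ) → ℝ) (hL : DifferentiableAt ℝ L (batchNorm x)) :
    DifferentiableAt ℝ (L ∘ batchNorm (B := B)) x ∧
    ∀ b : Fin B,
      fderiv ℝ (L ∘ batchNorm (B := B)) x (Pi.single b 1) =
        (1 / batchStd x) *
          (fderiv ℝ L (batchNorm x) (Pi.single b 1)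
            - (∑ a, fderiv ℝ L (batchNorm x) (Pi.single a 1)) / B
            - batchNorm x b *
                ((∑ a, batchNorm x a * fderiv ℝ L (batchNorm x) (Pi.single a 1)) / B)) :=
  batchNorm_backward_general x hσ L hL
end
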